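/- Let t > 0, −π/3 < θ < π/3 and (θ, t) ≠ (0, 1). Suppose ρ₀(θ,t) = Σ_{i=1}^{n₁} t_{1i}|z₁(1, β_{1i}, γ_{1i})⟩⟨z₁(1, β_{1i}, γ_{1i})| + Σ_{k=2}^{4} Σ_{i=1}^{n_k} (t_{ki}/t²)|z_k(β_{ki})⟩⟨z_k(β_{ki})|, where all coefficients t_{ki} are strictly positive and all β_{ki}, γ_{1i} are complex numbers of modulus one. Then Σ_{i=1}^{n_k} t_{ki} = 1 for each k ∈ {1,2,3,4}, and Σ_{i=1}^{n₁} t_{1i}β_{1i} = Σ_{i=1}^{n₁} t_{1i}γ_{1i} = Σ_{i=1}^{n₂} t_{2i}β_{2i} = Σ_{i=1}^{n₃} t_{3i}β_{3i} = Σ_{i=1}^{n₄} t_{4i}β_{4i} = 0. Consequently n₁ ≥ 3 and n_k ≥ 2 for k = 2, 3, 4. -/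

import Mathlib

open Complex Matrix BigOperators

/-- The tensor (Kronecker) product of two vectors in `ℂ³`, as a vector in `ℂ⁹`:
the component `ξ_i η_j` sits at index `3i + j` (0-based). -/
def kron (ξ η : Fin 3 → ℂ) : Fin 9 → ℂ :=
  fun k => ξ ⟨k.val / 3, by have := k.isLt; omega⟩ * η ⟨k.val % 3, by have := k.isLt; omega⟩

/-- `z₁(a₁,a₂,a₃) = (a₁,a₂,a₃) ⊗ (ā₁,ā₂,ā₃)`. -/
noncomputable def z1 (a₁ a₂ a₃ : ℂ) : Fin 9 → ℂ :=
  kron ![a₁, a₂, a₃] ![starRingEnd ℂ a₁, starRingEnd ℂ a₂, starRingEnd ℂ a₃]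

/-- `z₂(β) = (0, √t β, 1) ⊗ (0, √t β̄, t e^{iθ})`. -/
noncomputable def z2 (t θ : ℝ) (β : ℂ) : Fin 9 → ℂ :=
  kron ![0, (Real.sqrt t : ℂ) * β, 1]
       ![0, (Real.sqrt t : ℂ) * starRingEnd ℂ β, (t : ℂ) * exp (θ * I)]

/-- `z₃(β) = (1, 0, √t β) ⊗ (t e^{iθ}, 0, √t β̄)`. -/
noncomputable def z3 (t θ : ℝ) (β : ℂ) : Fin 9 → ℂ :=
  kron ![1, 0, (Real.sqrt t : ℂ) * β]
       ![(t : ℂ) * exp (θ * I), 0, (Real.sqrt t : ℂ) * starRingEnd ℂ β]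

/-- `z₄(β) = (√t β, 1, 0) ⊗ (√t β̄, t e^{iθ}, 0)`. -/
noncomputable def z4 (t θ : ℝ) (β : ℂ) : Fin 9 → ℂ :=
  kron ![(Real.sqrt t : ℂ) * β, 1, 0]
       ![(Real.sqrt t : ℂ) * starRingEnd ℂ β, (t : ℂ) * exp (θ * I), 0]

/-- The pure (unnormalized) state `|z⟩⟨z|`. -/
noncomputable def rank1 (v : Fin 9 → ℂ) : Matrix (Fin 9) (Fin 9) ℂ :=
  vecMulVec v (star v)

/-- The separable state `ρ₀(θ,t)`. -/
noncomputable def rho0 (θ t : ℝ) : Matrix (Fin 9) (Fin 9) ℂ :=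
  !![3, 0, 0, 0, 1 + exp (-θ * I), 0, 0, 0, 1 + exp (θ * I);
     0, 1 + (t : ℂ), 0, 0, 0, 0, 0, 0, 0;
     0, 0, 1 + 1 / (t : ℂ), 0, 0, 0, 0, 0, 0;
     0, 0, 0, 1 + 1 / (t : ℂ), 0, 0, 0, 0, 0;
     1 + exp (θ * I), 0, 0, 0, 3, 0, 0, 0, 1 + exp (-θ * I);
     0, 0, 0, 0, 0, 1 + (t : ℂ), 0, 0, 0;
     0, 0, 0, 0, 0, 0, 1 + (t : ℂ), 0, 0;
     0, 0, 0, 0, 0, 0, 0, 1 + 1 / (t : ℂ), 0;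
     1 + exp (-θ * I), 0, 0, 0, 1 + exp (θ * I), 0, 0, 0, 3]

open ComplexConjugate

/-!
Compare entries of both sides (0-based, index `3a + b` for `e_a ⊗ e_b`). As all `β`, `γ` are
unimodular, each entry used is a combination of the weight totals `S_k = ∑ t_{ki}` and the moments
`∑ t_{ki} β_{ki}`, `∑ t_{1i} γ_{1i}`, `∑ t_{1i} β̄_{1i} γ_{1i}`. The diagonal entries
`(0,0), (3,3), (5,5), (6,6)` are a linear system for the `S_k` whose determinant is a multiple of
`t² - t + 1 > 0`, so every `S_k = 1`. The entries `(0,2), (0,6)` are two equations `x + a y = 0`,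
`x + b y = 0` for `(∑ t₁γ₁, ∑ t₃β₃)` with `a / b = e^{iθ} / t`, and `(0,1), (0,3)` likewise for
`(∑ t₁β₁, conj ∑ t₄β₄)` with `a / b = t / e^{iθ}`. For `|θ| < π` the condition `(θ, t) ≠ (0, 1)`
says exactly that `e^{iθ} ≠ t`, so both systems force zero. Entry `(1,2)` is `∑ t₁β̄₁γ₁` alone, and
then `(4,7)` gives `∑ t₂β₂ = 0`. Finally, a single nonzero term cannot sum to zero, and two points
with vanishing weighted means of `β` and `γ` have `∑ t β̄ γ ≠ 0`.
-/

lemma eq_zero_of_add_mul_eq_zero {R : Type*} [CommRing R] [NoZeroDivisors R] {a b x y : R}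
    (hab : a ≠ b) (ha : x + a * y = 0) (hb : x + b * y = 0) : x = 0 ∧ y = 0 := by
  have hy : y = 0 := (mul_eq_zero.mp (by linear_combination ha - hb : (a - b) * y = 0)).resolve_left
    (sub_ne_zero.mpr hab)
  exact ⟨by simpa [hy] using ha, hy⟩

lemma one_lt_card_of_sum_eq_zero {ι M : Type*} [Fintype ι] [Nonempty ι] [AddCommMonoid M]
    {f : ι → M} (hf : ∀ i, f i ≠ 0) (h : ∑ i, f i = 0) : 1 < Fintype.card ι := by
  by_contra! hcard
  have : Subsingleton ι := Fintype.card_le_one_iff_subsingleton.mp hcard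
  obtain ⟨i⟩ := ‹Nonempty ι›
  exact hf i (by rwa [Fintype.sum_subsingleton f i] at h)

lemma mul_conj_eq_one_of_norm_eq_one {z : ℂ} (hz : ‖z‖ = 1) : z * conj z = 1 := by
  simp [Complex.mul_conj', hz]

lemma exp_mul_I_ne_ofReal {θ t : ℝ} (hθ : |θ| < Real.pi) (h : ¬(θ = 0 ∧ t = 1)) :
    cexp (θ * I) ≠ t := by
  intro he
  have hsin : Real.sin θ = 0 := by simpa using congrArg im he
  have hθ0 : θ = 0 :=
    (Real.sin_eq_zero_iff_of_lt_of_lt (neg_lt_of_abs_lt hθ) (lt_of_abs_lt hθ)).mp hsin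
  have ht1 : t = 1 := by simpa [hθ0] using (congrArg re he).symm
  exact h ⟨hθ0, ht1⟩

lemma two_le_of_sum_mul_eq_zero {n : ℕ} {w : Fin n → ℝ} {b : Fin n → ℂ} (hw : ∀ i, 0 < w i)
    (hb : ∀ i, ‖b i‖ = 1) (hw1 : ∑ i, w i = 1) (h : ∑ i, (w i : ℂ) * b i = 0) : 2 ≤ n := by
  have : Nonempty (Fin n) :=
    Fin.pos_iff_nonempty.mp (Nat.pos_of_ne_zero (by rintro rfl; simp at hw1))
  have hf : ∀ i, (w i : ℂ) * b i ≠ 0 := fun i =>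
    mul_ne_zero (ofReal_ne_zero.mpr (hw i).ne') (norm_ne_zero_iff.mp (by simp [hb i]))
  exact (by simpa using one_lt_card_of_sum_eq_zero hf h : 1 < n)

lemma sum_mul_conj_mul_ne_zero {w : Fin 2 → ℝ} {β γ : Fin 2 → ℂ} (hw : ∀ i, 0 < w i)
    (hβ : ∀ i, β i ≠ 0) (hγ : ∀ i, γ i ≠ 0) (hβ0 : ∑ i, (w i : ℂ) * β i = 0)
    (hγ0 : ∑ i, (w i : ℂ) * γ i = 0) : ∑ i, (w i : ℂ) * (conj (β i) * γ i) ≠ 0 := by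
  intro h
  simp only [Fin.sum_univ_two] at hβ0 hγ0 h
  have hβ0' : (w 0 : ℂ) * conj (β 0) + w 1 * conj (β 1) = 0 := by
    simpa using congrArg conj hβ0
  have key : (w 0 : ℂ) * (w 0 + w 1) * (conj (β 0) * γ 0) = 0 := by
    linear_combination (w 1 : ℂ) * h - w 1 * conj (β 1) * hγ0 + w 0 * γ 0 * hβ0'
  have hw01 : (w 0 : ℂ) + w 1 ≠ 0 := by exact_mod_cast (add_pos (hw 0) (hw 1)).ne'
  simp [(hw 0).ne', hw01, hβ 0, hγ 0] at key

lemma three_le_of_sum_mul_eq_zero {n : ℕ} {w : Fin n → ℝ} {β γ : Fin n → ℂ} (hw : ∀ i, 0 < w i)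
    (hβ : ∀ i, ‖β i‖ = 1) (hγ : ∀ i, ‖γ i‖ = 1) (hw1 : ∑ i, w i = 1)
    (hβ0 : ∑ i, (w i : ℂ) * β i = 0) (hγ0 : ∑ i, (w i : ℂ) * γ i = 0)
    (hβγ0 : ∑ i, (w i : ℂ) * (conj (β i) * γ i) = 0) : 3 ≤ n := by
  have := two_le_of_sum_mul_eq_zero hw hβ hw1 hβ0
  obtain rfl | h3 : n = 2 ∨ 3 ≤ n := by omega
  · exact absurd hβγ0 (sum_mul_conj_mul_ne_zero hw (fun i => norm_ne_zero_iff.mp (by simp [hβ i]))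
      (fun i => norm_ne_zero_iff.mp (by simp [hγ i])) hβ0 hγ0)
  · exact h3

lemma sum_smul_rank1_apply {ι : Type*} [Fintype ι] (c : ι → ℂ) (v : ι → Fin 9 → ℂ) (j k : Fin 9) :
    (∑ i, c i • rank1 (v i)) j k = ∑ i, c i * (v i j * conj (v i k)) := by
  simp [rank1, vecMulVec_apply, Matrix.sum_apply]

section

variable {n₁ n₂ n₃ n₄ : ℕ} (t θ : ℝ) (t1 : Fin n₁ → ℝ) (β1 γ1 : Fin n₁ → ℂ) (t2 : Fin n₂ → ℝ)
  (β2 : Fin n₂ → ℂ) (t3 : Fin n₃ → ℝ) (β3 : Fin n₃ → ℂ) (t4 : Fin n₄ → ℝ) (β4 : Fin n₄ → ℂ)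

noncomputable def productDecomposition : Matrix (Fin 9) (Fin 9) ℂ :=
  ∑ i : Fin n₁, (t1 i : ℂ) • rank1 (z1 1 (β1 i) (γ1 i))
    + ∑ i : Fin n₂, ((t2 i : ℂ) / (t : ℂ) ^ 2) • rank1 (z2 t θ (β2 i))
    + ∑ i : Fin n₃, ((t3 i : ℂ) / (t : ℂ) ^ 2) • rank1 (z3 t θ (β3 i))
    + ∑ i : Fin n₄, ((t4 i : ℂ) / (t : ℂ) ^ 2) • rank1 (z4 t θ (β4 i))

local notation "D" => productDecomposition t θ t1 β1 γ1 t2 β2 t3 β3 t4 β4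

lemma productDecomposition_diag (ht : 0 < t) (hβ1 : ∀ i, ‖β1 i‖ = 1) (hγ1 : ∀ i, ‖γ1 i‖ = 1)
    (hβ2 : ∀ i, ‖β2 i‖ = 1) (hβ3 : ∀ i, ‖β3 i‖ = 1) (hβ4 : ∀ i, ‖β4 i‖ = 1) :
    D 0 0 = ((∑ i, t1 i : ℝ) : ℂ) + ((∑ i, t3 i : ℝ) : ℂ) + ((∑ i, t4 i : ℝ) : ℂ) ∧
    D 3 3 = ((∑ i, t1 i : ℝ) : ℂ) + ((∑ i, t4 i : ℝ) : ℂ) / t ∧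
    D 5 5 = ((∑ i, t1 i : ℝ) : ℂ) + t * ((∑ i, t2 i : ℝ) : ℂ) ∧
    D 6 6 = ((∑ i, t1 i : ℝ) : ℂ) + t * ((∑ i, t3 i : ℝ) : ℂ) := by
  have hβ1' := fun i => mul_conj_eq_one_of_norm_eq_one (hβ1 i)
  have hγ1' := fun i => mul_conj_eq_one_of_norm_eq_one (hγ1 i)
  have hβ2' := fun i => mul_conj_eq_one_of_norm_eq_one (hβ2 i)
  have hβ3' := fun i => mul_conj_eq_one_of_norm_eq_one (hβ3 i)
  have hβ4' := fun i => mul_conj_eq_one_of_norm_eq_one (hβ4 i)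
  have he := mul_conj_eq_one_of_norm_eq_one (norm_exp_ofReal_mul_I θ)
  have hs : (√t : ℂ) * √t = t := by exact_mod_cast Real.mul_self_sqrt ht.le
  have ht0 : (t : ℂ) ≠ 0 := by exact_mod_cast ht.ne'
  refine ⟨?_, ?_, ?_, ?_⟩ <;>
    simp only [productDecomposition, Matrix.add_apply, sum_smul_rank1_apply] <;>
    simp only [z1, z2, z3, z4, kron, Fin.isValue, Fin.coe_ofNat_eq_mod, Nat.reduceMod,
      Nat.reduceDiv, Fin.reduceFinMk, cons_val, map_one, map_zero, map_mul, conj_ofReal, conj_conj,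
      mul_one, one_mul, mul_zero, zero_mul, Finset.sum_const_zero, add_zero, ofReal_sum,
      Finset.mul_sum, Finset.sum_div] <;>
    repeat' apply congrArg₂ (· + ·)
  all_goals exact Finset.sum_congr rfl fun i _ => by grind

lemma productDecomposition_offDiag (ht : 0 < t) (hβ1 : ∀ i, ‖β1 i‖ = 1)
    (hβ2 : ∀ i, ‖β2 i‖ = 1) (hβ4 : ∀ i, ‖β4 i‖ = 1) :
    D 0 1 = ∑ i, (t1 i : ℂ) * β1 i + √t * conj (cexp (θ * I)) * conj (∑ i, (t4 i : ℂ) * β4 i) ∧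
    D 0 3 = conj (∑ i, (t1 i : ℂ) * β1 i) + √t / t * ∑ i, (t4 i : ℂ) * β4 i ∧
    D 0 2 = ∑ i, (t1 i : ℂ) * γ1 i + √t * cexp (θ * I) / t * ∑ i, (t3 i : ℂ) * β3 i ∧
    D 0 6 = conj (∑ i, (t1 i : ℂ) * γ1 i) + √t * conj (∑ i, (t3 i : ℂ) * β3 i) ∧
    D 1 2 = ∑ i, (t1 i : ℂ) * (conj (β1 i) * γ1 i) ∧
    D 4 7 = conj (∑ i, (t1 i : ℂ) * (conj (β1 i) * γ1 i)) + √t / t * ∑ i, (t2 i : ℂ) * β2 i := by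
  have hβ1' := fun i => mul_conj_eq_one_of_norm_eq_one (hβ1 i)
  have hβ2' := fun i => mul_conj_eq_one_of_norm_eq_one (hβ2 i)
  have hβ4' := fun i => mul_conj_eq_one_of_norm_eq_one (hβ4 i)
  have he := mul_conj_eq_one_of_norm_eq_one (norm_exp_ofReal_mul_I θ)
  have hs : (√t : ℂ) * √t = t := by exact_mod_cast Real.mul_self_sqrt ht.le
  have ht0 : (t : ℂ) ≠ 0 := by exact_mod_cast ht.ne'
  refine ⟨?_, ?_, ?_, ?_, ?_, ?_⟩ <;>
    simp only [productDecomposition, Matrix.add_apply, sum_smul_rank1_apply] <;>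
    simp only [z1, z2, z3, z4, kron, Fin.isValue, Fin.coe_ofNat_eq_mod, Nat.reduceMod,
      Nat.reduceDiv, Fin.reduceFinMk, cons_val, map_one, map_zero, map_mul, map_sum, conj_ofReal,
      conj_conj, mul_one, one_mul, mul_zero, zero_mul, Finset.sum_const_zero, add_zero,
      Finset.mul_sum, add_right_inj] <;>
    repeat' apply congrArg₂ (· + ·)
  all_goals exact Finset.sum_congr rfl fun i _ => by grind

variable {t θ t1 β1 γ1 t2 β2 t3 β3 t4 β4}

lemma sum_weights_eq_one_of_rho0_eq (ht : 0 < t) (hβ1 : ∀ i, ‖β1 i‖ = 1) (hγ1 : ∀ i, ‖γ1 i‖ = 1)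
    (hβ2 : ∀ i, ‖β2 i‖ = 1) (hβ3 : ∀ i, ‖β3 i‖ = 1) (hβ4 : ∀ i, ‖β4 i‖ = 1) (hdec : rho0 θ t = D) :
    ∑ i, t1 i = 1 ∧ ∑ i, t2 i = 1 ∧ ∑ i, t3 i = 1 ∧ ∑ i, t4 i = 1 := by
  obtain ⟨h00, h33, h55, h66⟩ := productDecomposition_diag t θ t1 β1 γ1 t2 β2 t3 β3 t4 β4
    ht hβ1 hγ1 hβ2 hβ3 hβ4
  rw [← hdec] at h00 h33 h55 h66
  generalize ∑ i, t1 i = a at h00 h33 h55 h66 ⊢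
  generalize ∑ i, t2 i = b at h55 ⊢
  generalize ∑ i, t3 i = c at h00 h66 ⊢
  generalize ∑ i, t4 i = d at h00 h33 ⊢
  simp only [rho0, of_apply, cons_val', cons_val, cons_val_fin_one, Fin.isValue, one_div]
    at h00 h33 h55 h66
  norm_cast at h00 h33 h55 h66
  have h33' : t * a + d = t + 1 := by field_simp at h33; linarith
  have ha : a = 1 := by
    have hq : 0 < t ^ 2 - t + 1 := by nlinarith [sq_nonneg (t - 1)]
    have h : (t ^ 2 - t + 1) * (a - 1) = 0 := by linear_combination t * h00 - h66 + t * h33'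
    linarith [(mul_eq_zero.mp h).resolve_left hq.ne']
  subst ha
  refine ⟨rfl, mul_left_cancel₀ ht.ne' ?_, mul_left_cancel₀ ht.ne' ?_, by linarith⟩ <;> linarith

lemma moments_eq_zero_of_rho0_eq (ht : 0 < t) (hβ1 : ∀ i, ‖β1 i‖ = 1) (hβ2 : ∀ i, ‖β2 i‖ = 1)
    (hβ4 : ∀ i, ‖β4 i‖ = 1) (he : cexp (θ * I) ≠ t) (hdec : rho0 θ t = D) :
    ∑ i, (t1 i : ℂ) * β1 i = 0 ∧ ∑ i, (t1 i : ℂ) * γ1 i = 0 ∧ ∑ i, (t2 i : ℂ) * β2 i = 0 ∧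
      ∑ i, (t3 i : ℂ) * β3 i = 0 ∧ ∑ i, (t4 i : ℂ) * β4 i = 0 ∧
      ∑ i, (t1 i : ℂ) * (conj (β1 i) * γ1 i) = 0 := by
  obtain ⟨h01, h03, h02, h06, h12, h47⟩ :=
    productDecomposition_offDiag t θ t1 β1 γ1 t2 β2 t3 β3 t4 β4 ht hβ1 hβ2 hβ4
  rw [← hdec] at h01 h03 h02 h06 h12 h47
  generalize ∑ i, (t1 i : ℂ) * β1 i = B1 at *
  generalize ∑ i, (t1 i : ℂ) * γ1 i = C1 at *
  generalize ∑ i, (t2 i : ℂ) * β2 i = B2 at *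
  generalize ∑ i, (t3 i : ℂ) * β3 i = B3 at *
  generalize ∑ i, (t4 i : ℂ) * β4 i = B4 at *
  generalize ∑ i, (t1 i : ℂ) * (conj (β1 i) * γ1 i) = M at *
  simp only [rho0, of_apply, cons_val', cons_val, cons_val_fin_one, Fin.isValue, one_div]
    at h01 h03 h02 h06 h12 h47
  subst h12
  have hs : (√t : ℂ) ≠ 0 := ofReal_ne_zero.mpr (Real.sqrt_pos.mpr ht).ne'
  have ht0 : (t : ℂ) ≠ 0 := ofReal_ne_zero.mpr ht.ne'
  have hconj : conj (cexp (θ * I)) = (cexp (θ * I))⁻¹ :=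
    (inv_eq_conj (norm_exp_ofReal_mul_I θ)).symm
  obtain ⟨hC1, hB3⟩ : C1 = 0 ∧ B3 = 0 := by
    refine eq_zero_of_add_mul_eq_zero (a := √t * cexp (θ * I) / t) (b := √t) ?_ h02.symm ?_
    · intro h
      field_simp at h
      exact he h
    · simpa using congrArg conj h06.symm
  obtain ⟨hB1, hB4⟩ : B1 = 0 ∧ conj B4 = 0 := by
    refine eq_zero_of_add_mul_eq_zero (a := √t * conj (cexp (θ * I))) (b := √t / t) ?_ h01.symm ?_
    · intro h
      rw [hconj] at h
      field_simp at h
      exact he h.symm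
    · simpa using congrArg conj h03.symm
  refine ⟨hB1, hC1, ?_, hB3, by simpa using hB4, rfl⟩
  simpa [hs, ht0] using h47

end

/-- Constraints forced on any decomposition of `ρ₀(θ,t)` into pure product states of the four
admissible families: the weights in each family sum to `1`, the first moments vanish, and
`n₁ ≥ 3`, `n₂, n₃, n₄ ≥ 2`. -/
theorem rho0_decomposition_constraints (t θ : ℝ) (ht : 0 < t)
    (hθl : -(Real.pi / 3) < θ) (hθr : θ < Real.pi / 3) (hne : ¬(θ = 0 ∧ t = 1))
    (n₁ n₂ n₃ n₄ : ℕ)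
    (t1 : Fin n₁ → ℝ) (β1 γ1 : Fin n₁ → ℂ)
    (t2 : Fin n₂ → ℝ) (β2 : Fin n₂ → ℂ)
    (t3 : Fin n₃ → ℝ) (β3 : Fin n₃ → ℂ)
    (t4 : Fin n₄ → ℝ) (β4 : Fin n₄ → ℂ)
    (ht1 : ∀ i, 0 < t1 i) (ht2 : ∀ i, 0 < t2 i)
    (ht3 : ∀ i, 0 < t3 i) (ht4 : ∀ i, 0 < t4 i)
    (hβ1 : ∀ i, ‖β1 i‖ = 1) (hγ1 : ∀ i, ‖γ1 i‖ = 1)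
    (hβ2 : ∀ i, ‖β2 i‖ = 1) (hβ3 : ∀ i, ‖β3 i‖ = 1)
    (hβ4 : ∀ i, ‖β4 i‖ = 1)
    (hdec : rho0 θ t =
        ∑ i : Fin n₁, (t1 i : ℂ) • rank1 (z1 1 (β1 i) (γ1 i))
        + ∑ i : Fin n₂, ((t2 i : ℂ) / (t : ℂ) ^ 2) • rank1 (z2 t θ (β2 i))
        + ∑ i : Fin n₃, ((t3 i : ℂ) / (t : ℂ) ^ 2) • rank1 (z3 t θ (β3 i))
        + ∑ i : Fin n₄, ((t4 i : ℂ) / (t : ℂ) ^ 2) • rank1 (z4 t θ (β4 i))) :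
    (∑ i, t1 i = 1) ∧ (∑ i, t2 i = 1) ∧ (∑ i, t3 i = 1) ∧ (∑ i, t4 i = 1) ∧
    (∑ i, (t1 i : ℂ) * β1 i = 0) ∧ (∑ i, (t1 i : ℂ) * γ1 i = 0) ∧
    (∑ i, (t2 i : ℂ) * β2 i = 0) ∧ (∑ i, (t3 i : ℂ) * β3 i = 0) ∧
    (∑ i, (t4 i : ℂ) * β4 i = 0) ∧
    3 ≤ n₁ ∧ 2 ≤ n₂ ∧ 2 ≤ n₃ ∧ 2 ≤ n₄ := by
  have hθ : |θ| < Real.pi := abs_lt.mpr ⟨by linarith [Real.pi_pos], by linarith [Real.pi_pos]⟩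
  obtain ⟨hS1, hS2, hS3, hS4⟩ := sum_weights_eq_one_of_rho0_eq ht hβ1 hγ1 hβ2 hβ3 hβ4 hdec
  obtain ⟨hB1, hC1, hB2, hB3, hB4, hM⟩ :=
    moments_eq_zero_of_rho0_eq ht hβ1 hβ2 hβ4 (exp_mul_I_ne_ofReal hθ hne) hdec
  exact ⟨hS1, hS2, hS3, hS4, hB1, hC1, hB2, hB3, hB4,
    three_le_of_sum_mul_eq_zero ht1 hβ1 hγ1 hS1 hB1 hC1 hM,
    two_le_of_sum_mul_eq_zero ht2 hβ2 hS2 hB2, two_le_of_sum_mul_eq_zero ht3 hβ3 hS3 hB3,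
    two_le_of_sum_mul_eq_zero ht4 hβ4 hS4 hB4⟩
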